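/- Let I be a radical right ideal of ℍ[q₁,…,qₙ] such that V_c(I) is irreducible. Then I is a quasi prime right ideal. -/

import Mathlib

open scoped Quaternion

noncomputable section

/-- The quaternions. -/
abbrev ℍq : Type := Quaternion ℝ

/-- Slice regular polynomials in `n` quaternionic variables: formal polynomials with
quaternionic coefficients written on the right, with the slice (convolution) product. -/
abbrev SP (n : ℕ) : Type := AddMonoidAlgebra ℍq (Fin n →₀ ℕ)

/-- Right ideals of `SP n`. -/
abbrev RIdeal (n : ℕ) := Submodule (SP n)ᵐᵒᵖ (SP n)

/-- Evaluation of a slice regular polynomial at a point of `ℍⁿ`: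
`P(p) = ∑ p₁^{ℓ₁} ⋯ pₙ^{ℓₙ} a_{ℓ₁,…,ℓₙ}`. -/
def peval {n : ℕ} (p : Fin n → ℍq) (P : SP n) : ℍq :=
  Finsupp.sum P.coeff fun m a => (List.ofFn fun i => p i ^ m i).prod * a

/-- The regular conjugate `P^c`. -/
def rconj {n : ℕ} (P : SP n) : SP n :=
  AddMonoidAlgebra.ofCoeff (Finsupp.mapRange (star : ℍq → ℍq) (star_zero _) P.coeff)

/-- The symmetrization `P^s = P * P^c`. -/
def symzn {n : ℕ} (P : SP n) : SP n := P * rconj P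

/-- The sphere `𝕊` of quaternionic imaginary units. -/
def QSph : Set ℍq := {J | J ^ 2 = -1}

/-- The slice `ℂ_K = ℝ + ℝK`. -/
def CSlice (K : ℍq) : Set ℍq := {q | ∃ x y : ℝ, q = (x : ℍq) + (y : ℍq) * K}

/-- The points of `ℍⁿ` lying in some slice `ℂ_Kⁿ` (points with commuting components). -/
def commSlice (n : ℕ) : Set (Fin n → ℍq) := {p | ∃ K ∈ QSph, ∀ i, p i ∈ CSlice K}

/-- The common zero set `V(I)` of a right ideal. -/
def Vq {n : ℕ} (I : RIdeal n) : Set (Fin n → ℍq) := {p | ∀ P ∈ I, peval p P = 0}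

/-- `V_c(I) = V(I) ∩ ⋃_{K ∈ 𝕊} ℂ_Kⁿ`. -/
def Vc {n : ℕ} (I : RIdeal n) : Set (Fin n → ℍq) := Vq I ∩ commSlice n

/-- The spherical set `𝕊_a` of a point `a ∈ ℍⁿ`. -/
def SphSet {n : ℕ} (a : Fin n → ℍq) : Set (Fin n → ℍq) :=
  {p | ∃ g : ℍq, g ≠ 0 ∧ ∀ i, p i = g⁻¹ * a i * g}

/-- The symmetrization `𝕊_Z = ⋃_{a ∈ Z} 𝕊_a` of a subset of `ℍⁿ`. -/
def SymmSet {n : ℕ} (Z : Set (Fin n → ℍq)) : Set (Fin n → ℍq) := ⋃ a ∈ Z, SphSet a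

/-- `J(Z)`: the right ideal generated by the polynomials vanishing identically on `Z`. -/
def Jq {n : ℕ} (Z : Set (Fin n → ℍq)) : RIdeal n :=
  Submodule.span (SP n)ᵐᵒᵖ {P | ∀ p ∈ Z, peval p P = 0}

/-- A right ideal is completely prime if `P*Q ∈ I` and `P*I ⊆ I` imply `P ∈ I` or `Q ∈ I`. -/
def CompletelyPrime {n : ℕ} (I : RIdeal n) : Prop :=
  ∀ P Q : SP n, P * Q ∈ I → (∀ R ∈ I, P * R ∈ I) → P ∈ I ∨ Q ∈ I

/-- The radical `√I`: the intersection of all completely prime right ideals containing `I`. -/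
def radq {n : ℕ} (I : RIdeal n) : RIdeal n :=
  sInf {J : RIdeal n | CompletelyPrime J ∧ I ≤ J}

/-- A right ideal is quasi prime if `P*Q ∈ I` implies `P ∈ I` or `Q^s ∈ I`. -/
def QuasiPrime {n : ℕ} (I : RIdeal n) : Prop :=
  ∀ P Q : SP n, P * Q ∈ I → P ∈ I ∨ symzn Q ∈ I

/-- A right ideal is two-sided if it is also closed under left multiplication. -/
def IsTwoSidedIdl {n : ℕ} (I : RIdeal n) : Prop :=
  ∀ P : SP n, ∀ Q ∈ I, P * Q ∈ I

/-- The symmetrized ideal `S(I)`: the right ideal generated by `{P^s : P ∈ I}`. -/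
def SIdl {n : ℕ} (I : RIdeal n) : RIdeal n :=
  Submodule.span (SP n)ᵐᵒᵖ {Q | ∃ P ∈ I, Q = symzn P}

/-- The product `I₁ * I₂`: the right ideal generated by `{P*Q : P ∈ I₁, Q ∈ I₂}`. -/
def prodIdl {n : ℕ} (I₁ I₂ : RIdeal n) : RIdeal n :=
  Submodule.span (SP n)ᵐᵒᵖ {x | ∃ P ∈ I₁, ∃ Q ∈ I₂, x = P * Q}

/-- Reducibility of the slice algebraic set `V_c(I)`. -/
def VcReducible {n : ℕ} (I : RIdeal n) : Prop :=
  ∃ I₁ I₂ : RIdeal n, I₁ ≠ ⊥ ∧ I₁ ≠ ⊤ ∧ I₂ ≠ ⊥ ∧ I₂ ≠ ⊤ ∧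
    ¬ I₁ ≤ I₂ ∧ ¬ I₂ ≤ I₁ ∧ Vc I = Vc I₁ ∪ Vc I₂

/-- Reducibility of the slice algebraic set `V(I)`. -/
def VReducible {n : ℕ} (I : RIdeal n) : Prop :=
  ∃ I₁ I₂ : RIdeal n, I₁ ≠ ⊥ ∧ I₁ ≠ ⊤ ∧ I₂ ≠ ⊥ ∧ I₂ ≠ ⊤ ∧
    ¬ I₁ ≤ I₂ ∧ ¬ I₂ ≤ I₁ ∧ Vq I = Vq I₁ ∪ Vq I₂

/-- An irreducible slice regular polynomial. -/
def IrredPoly {n : ℕ} (H : SP n) : Prop :=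
  H ≠ 0 ∧ ¬ IsUnit H ∧ ∀ P Q : SP n, H = P * Q → IsUnit P ∨ IsUnit Q

/-- The variable `q_i` as a slice regular polynomial. -/
def Xq {n : ℕ} (i : Fin n) : SP n := AddMonoidAlgebra.single (Finsupp.single i 1) 1

/-- A constant polynomial. -/
def Cq {n : ℕ} (a : ℍq) : SP n := AddMonoidAlgebra.single 0 a

/-- A polynomial has real coefficients. -/
def RealCoeffs {n : ℕ} (P : SP n) : Prop := ∀ m : Fin n →₀ ℕ, ∃ r : ℝ, P.coeff m = (r : ℍq)

/-!
If `P * Q ∈ I` then `P * Q^s ∈ I`, and `Q^s` has real coefficients: it is central, and at points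
with commuting coordinates `(P * Q^s)(p) = Q^s(p) P(p)`. Hence
`V_c(I) = V_c(I + P ℍ[q]) ∪ V_c(I + Q^s ℍ[q])`. If neither `P` nor `Q^s` lay in the radical ideal
`I`, there would be completely prime `J₁ ⊇ I` with `Q^s ∉ J₁` and `J₂ ⊇ I` with `P ∉ J₂`;
centrality of `Q^s` forces `P ∈ J₁` and `Q^s ∈ J₂`, so the two pieces are nonzero, proper and
incomparable, and `V_c(I)` would be reducible.
-/

open AddMonoidAlgebra

theorem List.prod_ofFn_mul_of_commute {M : Type*} [Monoid M] {n : ℕ} (f g : Fin n → M)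
    (h : ∀ i j, Commute (f i) (g j)) :
    (List.ofFn fun i => f i * g i).prod = (List.ofFn f).prod * (List.ofFn g).prod := by
  induction n with
  | zero => simp
  | succ m ih =>
    have hcomm : Commute (g 0) (List.ofFn fun i : Fin m => f i.succ).prod :=
      Commute.list_prod_right _ _ fun y hy => by
        obtain ⟨i, rfl⟩ := List.mem_ofFn.mp hy
        exact (h i.succ 0).symm
    simp only [List.ofFn_succ, List.prod_cons,
      ih (fun i => f i.succ) (fun i => g i.succ) fun i j => h i.succ j.succ]
    rw [mul_assoc, ← mul_assoc (g 0), hcomm.eq, mul_assoc, mul_assoc]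

section SlicePolynomial

variable {n : ℕ}

def evalMonomial (p : Fin n → ℍq) (m : Fin n →₀ ℕ) : ℍq :=
  (List.ofFn fun i => p i ^ m i).prod

theorem evalMonomial_add {p : Fin n → ℍq} (hp : ∀ i j, Commute (p i) (p j))
    (k l : Fin n →₀ ℕ) : evalMonomial p (k + l) = evalMonomial p k * evalMonomial p l := by
  rw [evalMonomial, evalMonomial, evalMonomial,
    ← List.prod_ofFn_mul_of_commute _ _ fun i j => (hp i j).pow_pow _ _]
  simp only [Finsupp.coe_add, Pi.add_apply, pow_add]

theorem peval_eq_sum (p : Fin n → ℍq) (P : SP n) :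
    peval p P = P.coeff.sum fun m a => evalMonomial p m * a := rfl

@[simp]
theorem peval_zero (p : Fin n → ℍq) : peval p 0 = 0 := by
  simp [peval_eq_sum]

theorem peval_add (p : Fin n → ℍq) (P R : SP n) :
    peval p (P + R) = peval p P + peval p R := by
  simp only [peval_eq_sum, coeff_add]
  exact Finsupp.sum_add_index' (by simp) fun _ _ _ => mul_add _ _ _

theorem peval_single (p : Fin n → ℍq) (m : Fin n →₀ ℕ) (a : ℍq) :
    peval p (single m a) = evalMonomial p m * a := by
  rw [peval_eq_sum, coeff_single, Finsupp.sum_single_index (mul_zero _)]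

theorem peval_mul_of_commute {p : Fin n → ℍq} (hp : ∀ i j, Commute (p i) (p j)) (P R : SP n) :
    peval p (P * R) = R.coeff.sum fun l b => evalMonomial p l * peval p P * b := by
  induction R using AddMonoidAlgebra.induction_linear with
  | zero => simp
  | add R₁ R₂ h₁ h₂ =>
    rw [mul_add, peval_add, h₁, h₂, coeff_add,
      Finsupp.sum_add_index' (by simp) fun _ _ _ => mul_add _ _ _]
  | single l b =>
    rw [coeff_single, Finsupp.sum_single_index (mul_zero _)]
    induction P using AddMonoidAlgebra.induction_linear with
    | zero => simp
    | add P₁ P₂ h₁ h₂ => rw [add_mul, peval_add, peval_add, h₁, h₂, mul_add, add_mul]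
    | single k a =>
      rw [single_mul_single, peval_single, peval_single, add_comm, evalMonomial_add hp]
      simp only [mul_assoc]

theorem peval_mul_eq_zero_of_commute {p : Fin n → ℍq} (hp : ∀ i j, Commute (p i) (p j))
    {P : SP n} (hP : peval p P = 0) (R : SP n) : peval p (P * R) = 0 := by
  simp [peval_mul_of_commute hp, hP]

theorem peval_mul_of_realCoeffs {p : Fin n → ℍq} (hp : ∀ i j, Commute (p i) (p j))
    (P : SP n) {S : SP n} (hS : RealCoeffs S) : peval p (P * S) = peval p S * peval p P := by
  rw [peval_mul_of_commute hp, peval_eq_sum p S, Finsupp.sum_mul]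
  refine Finset.sum_congr rfl fun l _ => ?_
  obtain ⟨r, hr⟩ := hS l
  simp only [hr, mul_assoc, Quaternion.coe_commutes]

theorem RealCoeffs.commute {S : SP n} (hS : RealCoeffs S) (R : SP n) : Commute S R := by
  rw [← sum_coeff_single S]
  refine Commute.sum_left _ _ _ fun m _ => ?_
  obtain ⟨r, hr⟩ := hS m
  rw [hr]
  exact single_commute (fun _ => .all _ _) (Quaternion.coe_commutes r) R

theorem rconj_single (m : Fin n →₀ ℕ) (a : ℍq) : rconj (single m a : SP n) = single m (star a) := by
  simp [rconj, coeff_single]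

theorem rconj_add (P R : SP n) : rconj (P + R) = rconj P + rconj R := by
  simp [rconj, Finsupp.mapRange_add]

theorem rconj_rconj (P : SP n) : rconj (rconj P) = P := by
  ext m : 2
  simp [rconj]

theorem rconj_mul (P R : SP n) : rconj (P * R) = rconj R * rconj P := by
  induction P using AddMonoidAlgebra.induction_linear with
  | zero => simp [rconj]
  | add P₁ P₂ h₁ h₂ => rw [add_mul, rconj_add, h₁, h₂, rconj_add, mul_add]
  | single k a =>
    induction R using AddMonoidAlgebra.induction_linear with
    | zero => simp [rconj]
    | add R₁ R₂ h₁ h₂ => rw [mul_add, rconj_add, h₁, h₂, rconj_add, add_mul]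
    | single l b =>
      rw [single_mul_single, rconj_single, rconj_single, rconj_single, single_mul_single,
        star_mul, add_comm]

theorem realCoeffs_of_rconj_eq {S : SP n} (hS : rconj S = S) : RealCoeffs S := fun m =>
  ⟨(S.coeff m).re, Quaternion.star_eq_self.mp (congrArg (fun T : SP n => T.coeff m) hS)⟩

theorem realCoeffs_symzn (Q : SP n) : RealCoeffs (symzn Q) :=
  realCoeffs_of_rconj_eq (by rw [symzn, rconj_mul, rconj_rconj])

end SlicePolynomial

section RightIdeals

variable {n : ℕ}

theorem mul_symzn_mem {I : RIdeal n} {P Q : SP n} (h : P * Q ∈ I) : P * symzn Q ∈ I := by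
  rw [symzn, ← mul_assoc]
  exact I.smul_mem (MulOpposite.op (rconj Q)) h

theorem exists_completelyPrime_of_notMem_radq {I : RIdeal n} {x : SP n} (hx : x ∉ radq I) :
    ∃ J : RIdeal n, CompletelyPrime J ∧ I ≤ J ∧ x ∉ J := by
  by_contra! h
  exact hx (Submodule.mem_sInf.mpr fun J hJ => h J hJ.1 hJ.2)

theorem CompletelyPrime.mem_or_mem_of_central {J : RIdeal n} (hJ : CompletelyPrime J)
    {P S : SP n} (hS : ∀ R, Commute S R) (h : P * S ∈ J) : S ∈ J ∨ P ∈ J :=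
  hJ S P ((hS P).eq ▸ h) fun R hR => (hS R).eq ▸ J.smul_mem (MulOpposite.op S) hR

theorem sup_span_singleton_le {I J : RIdeal n} {x : SP n} (hIJ : I ≤ J) (hx : x ∈ J) :
    I ⊔ Submodule.span (SP n)ᵐᵒᵖ {x} ≤ J :=
  sup_le hIJ ((Submodule.span_singleton_le_iff_mem x J).mpr hx)

theorem mem_sup_span_singleton_self (I : RIdeal n) (x : SP n) :
    x ∈ I ⊔ Submodule.span (SP n)ᵐᵒᵖ {x} :=
  Submodule.mem_sup_right (Submodule.mem_span_singleton_self x)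

end RightIdeals

section SliceZeroSets

variable {n : ℕ}

theorem commute_of_mem_commSlice {p : Fin n → ℍq} (hp : p ∈ commSlice n) (i j : Fin n) :
    Commute (p i) (p j) := by
  obtain ⟨K, -, hK⟩ := hp
  obtain ⟨x, y, hi⟩ := hK i
  obtain ⟨x', y', hj⟩ := hK j
  have hreal : ∀ (r : ℝ) (a : ℍq), Commute (r : ℍq) a := Quaternion.coe_commutes
  rw [hi, hj]
  refine .add_left (hreal x _) (.add_right (hreal x' _).symm ?_)
  exact .mul_left (hreal y _) (.mul_right (hreal y' K).symm (.refl K))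

theorem Vc_antitone {I J : RIdeal n} (h : I ≤ J) : Vc J ⊆ Vc I :=
  fun _ hp => ⟨fun P hP => hp.1 P (h hP), hp.2⟩

theorem mem_Vc_sup_span_singleton {I : RIdeal n} {p : Fin n → ℍq} (hp : p ∈ Vc I) {G : SP n}
    (hG : peval p G = 0) : p ∈ Vc (I ⊔ Submodule.span (SP n)ᵐᵒᵖ {G}) := by
  refine ⟨fun x hx => ?_, hp.2⟩
  obtain ⟨a, ha, b, hb, rfl⟩ := Submodule.mem_sup.mp hx
  obtain ⟨r, rfl⟩ := Submodule.mem_span_singleton.mp hb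
  rw [peval_add, hp.1 a ha, zero_add]
  exact peval_mul_eq_zero_of_commute (commute_of_mem_commSlice hp.2) hG r.unop

theorem Vc_eq_union_of_mul_mem {I : RIdeal n} {P S : SP n} (hS : RealCoeffs S)
    (h : P * S ∈ I) :
    Vc I = Vc (I ⊔ Submodule.span (SP n)ᵐᵒᵖ {P}) ∪ Vc (I ⊔ Submodule.span (SP n)ᵐᵒᵖ {S}) := by
  refine subset_antisymm (fun p hp => ?_) (Set.union_subset (Vc_antitone le_sup_left)
    (Vc_antitone le_sup_left))
  have hzero : peval p S * peval p P = 0 := by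
    rw [← peval_mul_of_realCoeffs (commute_of_mem_commSlice hp.2) P hS]
    exact hp.1 _ h
  rcases mul_eq_zero.mp hzero with hSp | hPp
  · exact .inr (mem_Vc_sup_span_singleton hp hSp)
  · exact .inl (mem_Vc_sup_span_singleton hp hPp)

theorem vcReducible_of_separated {I I₁ I₂ J₁ J₂ : RIdeal n} {P S : SP n}
    (h₁ : I₁ ≤ J₁) (h₂ : I₂ ≤ J₂) (hP : P ∈ I₁) (hS : S ∈ I₂) (hPJ₂ : P ∉ J₂) (hSJ₁ : S ∉ J₁)
    (hV : Vc I = Vc I₁ ∪ Vc I₂) : VcReducible I := by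
  refine ⟨I₁, I₂, ?_, ?_, ?_, ?_, fun h => hPJ₂ (h₂ (h hP)), fun h => hSJ₁ (h₁ (h hS)), hV⟩
  · exact Submodule.ne_bot_iff _ |>.mpr ⟨P, hP, fun h0 => hPJ₂ (h0 ▸ J₂.zero_mem)⟩
  · exact fun htop => hSJ₁ (h₁ (htop ▸ Submodule.mem_top))
  · exact Submodule.ne_bot_iff _ |>.mpr ⟨S, hS, fun h0 => hSJ₁ (h0 ▸ J₁.zero_mem)⟩
  · exact fun htop => hPJ₂ (h₂ (htop ▸ Submodule.mem_top))

end SliceZeroSets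

/-- If `I` is radical and `V_c(I)` is irreducible, then `I` is quasi prime. -/
theorem stmt10 {n : ℕ} (I : RIdeal n) (hrad : radq I = I) (hirr : ¬ VcReducible I) :
    QuasiPrime I := by
  intro P Q hPQ
  by_contra! hcon
  obtain ⟨hP, hS⟩ := hcon
  have hSreal := realCoeffs_symzn Q
  have hPS : P * symzn Q ∈ I := mul_symzn_mem hPQ
  obtain ⟨J₁, hJ₁, hIJ₁, hSJ₁⟩ := exists_completelyPrime_of_notMem_radq (hrad.symm ▸ hS)
  obtain ⟨J₂, hJ₂, hIJ₂, hPJ₂⟩ := exists_completelyPrime_of_notMem_radq (hrad.symm ▸ hP)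
  have hPJ₁ : P ∈ J₁ :=
    (hJ₁.mem_or_mem_of_central hSreal.commute (hIJ₁ hPS)).resolve_left hSJ₁
  have hSJ₂ : symzn Q ∈ J₂ :=
    (hJ₂.mem_or_mem_of_central hSreal.commute (hIJ₂ hPS)).resolve_right hPJ₂
  exact hirr <| vcReducible_of_separated (sup_span_singleton_le hIJ₁ hPJ₁)
    (sup_span_singleton_le hIJ₂ hSJ₂) (mem_sup_span_singleton_self I P)
    (mem_sup_span_singleton_self I _) hPJ₂ hSJ₁ (Vc_eq_union_of_mul_mem hSreal hPS)

end
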